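/- arXiv:1706.04734 — 2 statements merged into one kernel-verified Lean document; each statement's English description precedes it below -/
import Mathlib

section
/- For an odd prime p, the total number of 2-cycles over all maps f_a(x) = x^2 + a with a in F_p equals (p-1)/2. Equivalently, the number of a in F_p such that the polynomial X^2 + X + a + 1 has two distinct roots in F_p, neither of which satisfies X^2 - X + a = 0, is (p-1)/2. -/
theorem stmt_3 (p : ℕ) [Fact p.Prime] (hp : Odd p) :
    (Finset.univ.filter (fun a : ZMod p =>
      ∃ x y : ZMod p, x ≠ y ∧ x ^ 2 + x + a + 1 = 0 ∧ y ^ 2 + y + a + 1 = 0 ∧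
        x ^ 2 - x + a ≠ 0 ∧ y ^ 2 - y + a ≠ 0)).card = (p - 1) / 2 := by
  have hp2 : p ≠ 2 := by
    rintro rfl; exact (by decide : ¬ Odd 2) hp
  have h2 : (2 : ZMod p) ≠ 0 := by
    have : ((2 : ℕ) : ZMod p) ≠ 0 := by
      rw [Ne, ZMod.natCast_eq_zero_iff]
      intro h
      exact hp2 ((Nat.prime_dvd_prime_iff_eq (Fact.out) Nat.prime_two).mp h)
    simpa using this
  set T := (Finset.univ.filter (fun a : ZMod p =>
      ∃ x y : ZMod p, x ≠ y ∧ x ^ 2 + x + a + 1 = 0 ∧ y ^ 2 + y + a + 1 = 0 ∧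
        x ^ 2 - x + a ≠ 0 ∧ y ^ 2 - y + a ≠ 0)) with hT
  set S := (Finset.univ.filter (fun x : ZMod p => 2 * x + 1 ≠ 0)) with hS
  have key : T = S.image (fun x => -(x ^ 2 + x + 1)) := by
    ext a
    simp only [hT, hS, Finset.mem_filter, Finset.mem_image, Finset.mem_univ, true_and]
    constructor
    · rintro ⟨x, y, hxy, hx, hy, _, _⟩
      have hsum : (x - y) * (x + y + 1) = 0 := by ring_nf; linear_combination hx - hy
      have hy' : y = -1 - x := by
        rcases mul_eq_zero.mp hsum with h | h
        · exact absurd (sub_eq_zero.mp h) hxy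
        · linear_combination h
      refine ⟨x, ?_, by linear_combination -hx⟩
      intro h0
      apply hxy
      rw [hy']
      linear_combination h0
    · rintro ⟨x, hx0, rfl⟩
      refine ⟨x, -1 - x, ?_, by ring, by ring, ?_, ?_⟩
      · intro h; apply hx0; linear_combination h
      · intro h; apply hx0; linear_combination -h
      · intro h; apply hx0; linear_combination h
  have hfib : ∀ a ∈ T, (S.filter (fun x => -(x ^ 2 + x + 1) = a)).card = 2 := by
    intro a ha
    rw [key] at ha
    obtain ⟨x₀, hx₀S, hx₀⟩ := Finset.mem_image.mp ha
    simp only [hS, Finset.mem_filter, Finset.mem_univ, true_and] at hx₀S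
    have hne : x₀ ≠ -1 - x₀ := fun h => hx₀S (by linear_combination h)
    have : S.filter (fun x => -(x ^ 2 + x + 1) = a) = {x₀, -1 - x₀} := by
      ext x
      simp only [hS, Finset.mem_filter, Finset.mem_univ, true_and, Finset.mem_insert,
        Finset.mem_singleton]
      constructor
      · rintro ⟨hx0, hxa⟩
        have : (x - x₀) * (x + x₀ + 1) = 0 := by linear_combination hx₀ - hxa
        rcases mul_eq_zero.mp this with h | h
        · left; linear_combination h
        · right; linear_combination h
      · rintro (rfl | rfl)
        · exact ⟨hx₀S, hx₀⟩
        · exact ⟨fun h => hx₀S (by linear_combination -h), by linear_combination hx₀⟩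
    rw [this, Finset.card_insert_of_notMem (by simpa using hne), Finset.card_singleton]
  have hcount : S.card = 2 * T.card := by
    rw [key, Finset.card_eq_sum_card_fiberwise (f := fun x => -(x ^ 2 + x + 1))
      (t := S.image (fun x => -(x ^ 2 + x + 1))) (fun x hx => Finset.mem_image_of_mem _ hx)]
    rw [← key]
    rw [Finset.sum_congr rfl hfib, Finset.sum_const, smul_eq_mul, mul_comm]
  have hScard : S.card = p - 1 := by
    have : S = Finset.univ.erase (-(2⁻¹ : ZMod p)) := by
      ext x
      simp only [hS, Finset.mem_filter, Finset.mem_univ, true_and, Finset.mem_erase, and_true]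
      have hroot : 2 * (-(2⁻¹ : ZMod p)) + 1 = 0 := by
        have := mul_inv_cancel₀ h2
        linear_combination -this
      constructor
      · intro h hx
        apply h
        rw [hx]
        exact hroot
      · intro h h0
        apply h
        apply mul_left_cancel₀ h2
        linear_combination h0 - hroot
    rw [this, Finset.card_erase_of_mem (Finset.mem_univ _), Finset.card_univ, ZMod.card]
  have hp1 : 1 ≤ p := Nat.Prime.one_lt (Fact.out) |>.le
  omega
end

section
/- Let p be an odd prime and a in F_p with a ≠ 0. In the functional graph of f_a(x) = x^2 + a on F_p, every weakly connected component not containing the vertex 0 has an even number of vertices. -/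
open Relation

lemma aux_even_card {F : Type*} [Field F] (h2 : (2 : F) ≠ 0) :
    ∀ s : Finset F, 0 ∉ s → (∀ y ∈ s, -y ∈ s) → Even s.card := by
  classical
  intro s
  induction s using Finset.strongInduction with
  | _ s ih =>
    intro h0 hneg
    rcases s.eq_empty_or_nonempty with rfl | ⟨y, hy⟩
    · simp
    · have hny : -y ∈ s := hneg y hy
      have hyne : y ≠ -y := by
        intro h
        apply h0
        have h2y : 2 * y = 0 := by linear_combination h
        rcases mul_eq_zero.mp h2y with h' | h'
        · exact absurd h' h2
        · rwa [h'] at hy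
      have hpair : ({y, -y} : Finset F) ⊆ s := by
        intro z hz
        simp only [Finset.mem_insert, Finset.mem_singleton] at hz
        rcases hz with rfl | rfl <;> assumption
      have hpairne : ({y, -y} : Finset F).Nonempty := ⟨y, by simp⟩
      have hss : s \ {y, -y} ⊂ s := Finset.sdiff_ssubset hpair hpairne
      have h0' : 0 ∉ s \ {y, -y} := fun h => h0 (Finset.mem_sdiff.mp h).1
      have hneg' : ∀ z ∈ s \ {y, -y}, -z ∈ s \ {y, -y} := by
        intro z hz
        rcases Finset.mem_sdiff.mp hz with ⟨hzs, hznp⟩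
        refine Finset.mem_sdiff.mpr ⟨hneg z hzs, ?_⟩
        simp only [Finset.mem_insert, Finset.mem_singleton] at hznp ⊢
        push_neg at hznp ⊢
        constructor
        · intro h; exact hznp.2 (by rw [← h, neg_neg])
        · intro h; exact hznp.1 (neg_injective h)
      have hcard : (s \ {y, -y}).card + 2 = s.card := by
        have h2card : ({y, -y} : Finset F).card = 2 := by
          rw [Finset.card_insert_of_notMem (by simpa using hyne), Finset.card_singleton]
        rw [← h2card]
        exact Finset.card_sdiff_add_card_eq_card hpair
      have := ih _ hss h0' hneg'
      rw [← hcard]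
      exact this.add even_two

theorem stmt_12 (p : ℕ) [Fact p.Prime] (hp : Odd p) (a : ZMod p) (ha : a ≠ 0)
    (x : ZMod p)
    (hx : ¬ Relation.EqvGen (fun u v : ZMod p => u ^ 2 + a = v) x 0) :
    Even (Set.ncard {y : ZMod p |
      Relation.EqvGen (fun u v : ZMod p => u ^ 2 + a = v) x y}) := by
  classical
  set R := fun u v : ZMod p => u ^ 2 + a = v with hR
  have h2 : (2 : ZMod p) ≠ 0 := by
    intro h
    have : (p : ℕ) ∣ 2 := by
      have := (ZMod.natCast_eq_zero_iff 2 p).mp (by exact_mod_cast h)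
      exact this
    have hp2 : p = 2 := (Nat.prime_dvd_prime_iff_eq (Fact.out) Nat.prime_two).mp this
    rw [hp2] at hp
    exact (Nat.not_odd_iff_even.mpr (by norm_num)) hp
  set S : Set (ZMod p) := {y : ZMod p | EqvGen R x y} with hS
  have hfin : S.Finite := Set.toFinite S
  have h0 : (0 : ZMod p) ∉ hfin.toFinset := by
    simp only [Set.Finite.mem_toFinset, hS, Set.mem_setOf_eq]
    exact hx
  have hneg : ∀ y ∈ hfin.toFinset, -y ∈ hfin.toFinset := by
    intro y hy
    simp only [Set.Finite.mem_toFinset, hS, Set.mem_setOf_eq] at hy ⊢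
    have step1 : EqvGen R y (y ^ 2 + a) := EqvGen.rel y (y ^ 2 + a) rfl
    have step2 : EqvGen R (-y) (y ^ 2 + a) := EqvGen.rel (-y) (y ^ 2 + a) (by ring)
    exact EqvGen.trans x y (-y) hy (EqvGen.trans y (y ^ 2 + a) (-y) step1 (EqvGen.symm _ _ step2))
  have := aux_even_card h2 hfin.toFinset h0 hneg
  rwa [Set.ncard_eq_toFinset_card S hfin]
end
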